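/- Let D be the 5×5 matrix with rows (0,0,0,-k1,p1), (0,0,0,k2,-p2), (0,0,0,-k3,p3), (-k1,k2,-k3,0,0), (p1,-p2,p3,0,0) over ℚ[p1,p2,p3,k1,k2,k3]. Then det(D - T·Id₅) = T⁵ - ((p·p)+(k·k))T³ + ((p·p)(k·k) - (p·k)²)T. -/

import Mathlib

open Matrix Polynomial

noncomputable def p1 : MvPolynomial (Fin 6) ℚ := MvPolynomial.X 0
noncomputable def p2 : MvPolynomial (Fin 6) ℚ := MvPolynomial.X 1
noncomputable def p3 : MvPolynomial (Fin 6) ℚ := MvPolynomial.X 2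
noncomputable def k1 : MvPolynomial (Fin 6) ℚ := MvPolynomial.X 3
noncomputable def k2 : MvPolynomial (Fin 6) ℚ := MvPolynomial.X 4
noncomputable def k3 : MvPolynomial (Fin 6) ℚ := MvPolynomial.X 5

noncomputable def D : Matrix (Fin 5) (Fin 5) (MvPolynomial (Fin 6) ℚ) :=
  !![0, 0, 0, -k1, p1;
    0, 0, 0, k2, -p2;
    0, 0, 0, -k3, p3;
    -k1, k2, -k3, 0, 0;
    p1, -p2, p3, 0, 0]

@[simp] lemma aux_castSucc2_4 : (Fin.castSucc 2 : Fin 4) = 2 := rfl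
@[simp] lemma aux_castSucc2_5 : (Fin.castSucc 2 : Fin 5) = 2 := rfl
@[simp] lemma aux_castSucc3_5 : ((2 : Fin 3).succ.castSucc : Fin 5) = 3 := rfl
@[simp] lemma aux_castSucc22_5 : ((Fin.castSucc 2 : Fin 4).castSucc : Fin 5) = 2 := rfl

set_option maxHeartbeats 4000000 in
theorem aux_det5 {R : Type*} [CommRing R] (x a b c d e f : R) :
    (!![x, 0, 0, d, -a; 0, x, 0, -e, b; 0, 0, x, f, -c; d, -e, f, x, 0; -a, b, -c, 0, x]).det =
      x ^ 5 + (-((a^2 + b^2 + c^2) + (d^2 + e^2 + f^2))) * x ^ 3 + ((a^2 + b^2 + c^2)*(d^2 + e^2 + f^2) - (a*d + b*e + c*f)^2) * x := by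
  simp [Matrix.det_succ_row_zero, Fin.sum_univ_succ, Fin.succAbove, Fin.ext_iff,
    Matrix.cons_val_three, Matrix.cons_val_four]
  ring

theorem main :
    Matrix.det ((Polynomial.X : Polynomial (MvPolynomial (Fin 6) ℚ)) • (1 : Matrix (Fin 5) (Fin 5) (Polynomial (MvPolynomial (Fin 6) ℚ))) - (D.map Polynomial.C)) =
      Polynomial.X ^ 5 + Polynomial.C (-((p1^2 + p2^2 + p3^2) + (k1^2 + k2^2 + k3^2))) * Polynomial.X ^ 3 + Polynomial.C ((p1^2 + p2^2 + p3^2)*(k1^2 + k2^2 + k3^2) - (p1*k1 + p2*k2 + p3*k3)^2) * Polynomial.X := by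
  rw [show ((Polynomial.X : Polynomial (MvPolynomial (Fin 6) ℚ)) • (1 : Matrix (Fin 5) (Fin 5) (Polynomial (MvPolynomial (Fin 6) ℚ))) - (D.map Polynomial.C)) = !![X, 0, 0, C k1, -C p1; 0, X, 0, -C k2, C p2; 0, 0, X, C k3, -C p3; C k1, -C k2, C k3, X, 0; -C p1, C p2, -C p3, 0, X] from by
    ext i j
    fin_cases i <;> fin_cases j <;>
      simp [D, Matrix.smul_apply, Matrix.one_apply, Matrix.map_apply, Matrix.vecHead, Matrix.vecTail]]
  rw [aux_det5]
  simp only [_root_.map_mul, _root_.map_add, _root_.map_sub, map_pow, _root_.map_neg]
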